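/- arXiv:1711.02641 — 2 statements merged into one kernel-verified Lean document; each statement's English description precedes it below -/
import Mathlib

section
/- Right-linearity with splitting: for h₁, h₂ ∈ L¹(ℝⁿ, Cl(p,q)) and α, β ∈ Cl(p,q), 𝓕^i{h₁α + h₂β}(w) = 𝓕^i{h₁}(w)α₊ + 𝓕^{-i}{h₁}(w)α₋ + 𝓕^i{h₂}(w)β₊ + 𝓕^{-i}{h₂}(w)β₋, where α₊ = (1/2)(α + i⁻¹αi) and α₋ = (1/2)(α - i⁻¹αi) are the parts of α commuting and anticommuting with i. -/
open MeasureTheory Finset Filter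
noncomputable section

/-- Model of the real Clifford algebra `Cl(p,q)` (with `n = p + q`) as the space of
coordinate functions on the canonical graded basis `{e_A : A ⊆ {1,…,n}}`. -/
abbrev Cl (n : ℕ) := Finset (Fin n) → ℝ

/-- The signature signs: `ε_k = 1` for `k < p`, `ε_k = -1` otherwise. -/
def eps (p : ℕ) {n : ℕ} (k : Fin n) : ℝ := if (k : ℕ) < p then 1 else -1

/-- The sign in `e_A e_B = clSign p A B • e_{A Δ B}`: reordering parity times signature signs. -/
def clSign (p : ℕ) {n : ℕ} (A B : Finset (Fin n)) : ℝ :=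
  (-1 : ℝ) ^ ((A ×ˢ B).filter (fun ab => ab.2 < ab.1)).card * ∏ k ∈ A ∩ B, eps p k

/-- The geometric (Clifford) product on `Cl(p,q)`. -/
def clMul (p : ℕ) {n : ℕ} (x y : Cl n) : Cl n :=
  fun C => ∑ A : Finset (Fin n), ∑ B : Finset (Fin n),
    if symmDiff A B = C then x A * y B * clSign p A B else 0

/-- The unit `1 = e_∅` of the Clifford algebra. -/
def clOne (n : ℕ) : Cl n := fun C => if C = ∅ then 1 else 0

/-- The principal reverse `α̃`. -/
def clRev (p : ℕ) {n : ℕ} (x : Cl n) : Cl n :=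
  fun A => (-1 : ℝ) ^ (A.card * (A.card - 1) / 2) * (∏ k ∈ A, eps p k) * x A

/-- Squared modulus `|M|² = Σ_A M_A²` of a multivector. -/
def modSq {n : ℕ} (M : Cl n) : ℝ := ∑ A : Finset (Fin n), M A ^ 2

/-- Modulus `|M|` of a multivector. -/
def clMod {n : ℕ} (M : Cl n) : ℝ := Real.sqrt (modSq M)

/-- `i` is a square root of `-1` in `Cl(p,q)`. -/
def isRoot (p : ℕ) {n : ℕ} (i : Cl n) : Prop := clMul p i i = - clOne n

/-- `u(x,w) = Σ_l x_l w_l`. -/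
def uu {n : ℕ} (x w : Fin n → ℝ) : ℝ := ∑ l, x l * w l

/-- The kernel `e^{-i u(x,w)} = cos(u(x,w)) - sin(u(x,w)) i`. -/
def kernelMinus {n : ℕ} (i : Cl n) (x w : Fin n → ℝ) : Cl n :=
  Real.cos (uu x w) • clOne n - Real.sin (uu x w) • i

/-- The kernel `e^{i u(x,w)} = cos(u(x,w)) + sin(u(x,w)) i`. -/
def kernelPlus {n : ℕ} (i : Cl n) (x w : Fin n → ℝ) : Cl n :=
  Real.cos (uu x w) • clOne n + Real.sin (uu x w) • i

/-- The Clifford–Fourier transform `𝓕^i{f}(w) = ∫ f(x) e^{-i u(x,w)} dⁿx`. -/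
def cft (p : ℕ) {n : ℕ} (i : Cl n) (f : (Fin n → ℝ) → Cl n) (w : Fin n → ℝ) : Cl n :=
  ∫ x : Fin n → ℝ, clMul p (f x) (kernelMinus i x w)

variable {n : ℕ} {p : ℕ}

lemma clMul_add_left (x x' y : Cl n) : clMul p (x + x') y = clMul p x y + clMul p x' y := by
  funext C
  simp only [clMul, Pi.add_apply]
  rw [← Finset.sum_add_distrib]
  refine Finset.sum_congr rfl fun A _ => ?_
  rw [← Finset.sum_add_distrib]
  refine Finset.sum_congr rfl fun B _ => ?_
  split <;> ring

lemma clMul_add_right (x y y' : Cl n) : clMul p x (y + y') = clMul p x y + clMul p x y' := by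
  funext C
  simp only [clMul, Pi.add_apply]
  rw [← Finset.sum_add_distrib]
  refine Finset.sum_congr rfl fun A _ => ?_
  rw [← Finset.sum_add_distrib]
  refine Finset.sum_congr rfl fun B _ => ?_
  split <;> ring

lemma clMul_sub_right (x y y' : Cl n) : clMul p x (y - y') = clMul p x y - clMul p x y' := by
  funext C
  simp only [clMul, Pi.sub_apply]
  rw [← Finset.sum_sub_distrib]
  refine Finset.sum_congr rfl fun A _ => ?_
  rw [← Finset.sum_sub_distrib]
  refine Finset.sum_congr rfl fun B _ => ?_
  split <;> ring

lemma clMul_sub_left (x x' y : Cl n) : clMul p (x - x') y = clMul p x y - clMul p x' y := by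
  funext C
  simp only [clMul, Pi.sub_apply]
  rw [← Finset.sum_sub_distrib]
  refine Finset.sum_congr rfl fun A _ => ?_
  rw [← Finset.sum_sub_distrib]
  refine Finset.sum_congr rfl fun B _ => ?_
  split <;> ring

lemma clMul_smul_left (r : ℝ) (x y : Cl n) : clMul p (r • x) y = r • clMul p x y := by
  funext C
  simp only [clMul, Pi.smul_apply, smul_eq_mul, Finset.mul_sum]
  refine Finset.sum_congr rfl fun A _ => Finset.sum_congr rfl fun B _ => ?_
  split <;> ring

lemma clMul_smul_right (r : ℝ) (x y : Cl n) : clMul p x (r • y) = r • clMul p x y := by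
  funext C
  simp only [clMul, Pi.smul_apply, smul_eq_mul, Finset.mul_sum]
  refine Finset.sum_congr rfl fun A _ => Finset.sum_congr rfl fun B _ => ?_
  split <;> ring

lemma clMul_neg_left (x y : Cl n) : clMul p (-x) y = -clMul p x y := by
  rw [← neg_one_smul ℝ x, clMul_smul_left, neg_one_smul]

lemma clMul_neg_right (x y : Cl n) : clMul p x (-y) = -clMul p x y := by
  rw [← neg_one_smul ℝ y, clMul_smul_right, neg_one_smul]

lemma clSign_empty_right (A : Finset (Fin n)) : clSign p A ∅ = 1 := by
  simp [clSign]

lemma clSign_empty_left (B : Finset (Fin n)) : clSign p ∅ B = 1 := by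
  simp [clSign]

lemma clMul_one_right (x : Cl n) : clMul p x (clOne n) = x := by
  funext C
  simp only [clMul, clOne]
  have h : ∀ A : Finset (Fin n),
      (∑ B : Finset (Fin n), if symmDiff A B = C then x A * (if B = ∅ then 1 else 0) * clSign p A B else 0)
      = if A = C then x A else 0 := by
    intro A
    rw [Finset.sum_eq_single ∅]
    · simp [clSign_empty_right, symmDiff]
    · intro b _ hb; simp [hb]
    · simp
  simp only [h]
  rw [Finset.sum_ite_eq' Finset.univ C x]
  simp

lemma clMul_one_left (x : Cl n) : clMul p (clOne n) x = x := by
  funext C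
  simp only [clMul, clOne]
  rw [Finset.sum_eq_single ∅]
  · have hs : ∀ B : Finset (Fin n), symmDiff ∅ B = B := fun B => by simp [symmDiff]
    simp [hs, clSign_empty_left]
  · intro b _ hb; simp [hb]
  · simp

/-- Number of "inversions" used in `clSign`. -/
def invc {n : ℕ} (A B : Finset (Fin n)) : ℕ := ((A ×ˢ B).filter (fun ab => ab.2 < ab.1)).card

lemma invc_union_left {A A' B : Finset (Fin n)} (h : Disjoint A A') :
    invc (A ∪ A') B = invc A B + invc A' B := by
  unfold invc
  rw [Finset.union_product, Finset.filter_union, Finset.card_union_of_disjoint]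
  exact Finset.disjoint_filter_filter (Finset.disjoint_product.mpr (Or.inl h))

lemma invc_union_right {A B B' : Finset (Fin n)} (h : Disjoint B B') :
    invc A (B ∪ B') = invc A B + invc A B' := by
  unfold invc
  rw [Finset.product_union, Finset.filter_union, Finset.card_union_of_disjoint]
  exact Finset.disjoint_filter_filter (Finset.disjoint_product.mpr (Or.inr h))

lemma invc_symmDiff_left (A B C : Finset (Fin n)) :
    invc A C + invc B C = invc (symmDiff A B) C + 2 * invc (A ∩ B) C := by
  have hA : invc A C = invc (A \ B) C + invc (A ∩ B) C := by
    rw [← invc_union_left (Finset.disjoint_sdiff_inter A B), Finset.sdiff_union_inter]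
  have hB : invc B C = invc (B \ A) C + invc (A ∩ B) C := by
    rw [Finset.inter_comm]
    rw [← invc_union_left (Finset.disjoint_sdiff_inter B A), Finset.sdiff_union_inter]
  have hD : invc (symmDiff A B) C = invc (A \ B) C + invc (B \ A) C := by
    rw [symmDiff_def]
    exact invc_union_left disjoint_sdiff_sdiff
  omega

lemma invc_symmDiff_right (A B C : Finset (Fin n)) :
    invc A B + invc A C = invc A (symmDiff B C) + 2 * invc A (B ∩ C) := by
  have hB : invc A B = invc A (B \ C) + invc A (B ∩ C) := by
    rw [← invc_union_right (Finset.disjoint_sdiff_inter B C), Finset.sdiff_union_inter]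
  have hC : invc A C = invc A (C \ B) + invc A (B ∩ C) := by
    rw [Finset.inter_comm]
    rw [← invc_union_right (Finset.disjoint_sdiff_inter C B), Finset.sdiff_union_inter]
  have hD : invc A (symmDiff B C) = invc A (B \ C) + invc A (C \ B) := by
    rw [symmDiff_def]
    exact invc_union_right disjoint_sdiff_sdiff
  omega

lemma neg_one_pow_invc_symmDiff_left (A B C : Finset (Fin n)) :
    ((-1 : ℝ)) ^ invc (symmDiff A B) C = (-1) ^ invc A C * (-1) ^ invc B C := by
  rw [← pow_add, invc_symmDiff_left A B C, pow_add, pow_mul]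
  norm_num

lemma neg_one_pow_invc_symmDiff_right (A B C : Finset (Fin n)) :
    ((-1 : ℝ)) ^ invc A (symmDiff B C) = (-1) ^ invc A B * (-1) ^ invc A C := by
  rw [← pow_add, invc_symmDiff_right A B C, pow_add, pow_mul]
  norm_num

lemma eps_prod_symmDiff (S T : Finset (Fin n)) :
    (∏ k ∈ symmDiff S T, eps p k) = (∏ k ∈ S, eps p k) * ∏ k ∈ T, eps p k := by
  have h1 : (∏ k ∈ S, eps p k) * ∏ k ∈ T, eps p k
      = (∏ k ∈ S ∪ T, eps p k) * ∏ k ∈ S ∩ T, eps p k := (Finset.prod_union_inter).symm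
  have h2 : (∏ k ∈ S ∪ T, eps p k) = (∏ k ∈ symmDiff S T, eps p k) * ∏ k ∈ S ∩ T, eps p k := by
    rw [← Finset.prod_union]
    · congr 1
      rw [symmDiff_def]
      ext a
      simp only [Finset.mem_union, Finset.mem_sdiff, Finset.mem_inter, Finset.sup_eq_union,
        Finset.mem_union]
      tauto
    · rw [symmDiff_def]
      simp only [Finset.sup_eq_union, Finset.disjoint_union_left]
      constructor
      · exact Finset.disjoint_left.mpr fun a ha hb => (Finset.mem_sdiff.mp ha).2
          (Finset.mem_inter.mp hb).2
      · exact Finset.disjoint_left.mpr fun a ha hb => (Finset.mem_sdiff.mp ha).2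
          (Finset.mem_inter.mp hb).1
  have h3 : (∏ k ∈ S ∩ T, eps p k) * ∏ k ∈ S ∩ T, eps p k = 1 := by
    rw [← Finset.prod_mul_distrib]
    refine Finset.prod_eq_one fun k _ => ?_
    unfold eps; split <;> norm_num
  rw [h1, h2]
  rw [mul_assoc, h3, mul_one]

lemma clSign_def' (A B : Finset (Fin n)) :
    clSign p A B = (-1 : ℝ) ^ invc A B * ∏ k ∈ A ∩ B, eps p k := rfl

lemma clSign_cocycle (A B C : Finset (Fin n)) :
    clSign p A B * clSign p (symmDiff A B) C = clSign p B C * clSign p A (symmDiff B C) := by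
  have hset : symmDiff (A ∩ B) (symmDiff A B ∩ C) = symmDiff (B ∩ C) (A ∩ symmDiff B C) := by
    ext a
    simp only [Finset.mem_symmDiff, Finset.mem_inter]
    tauto
  simp only [clSign_def']
  rw [neg_one_pow_invc_symmDiff_left, neg_one_pow_invc_symmDiff_right]
  have e1 : (∏ k ∈ A ∩ B, eps p k) * ∏ k ∈ symmDiff A B ∩ C, eps p k
      = ∏ k ∈ symmDiff (A ∩ B) (symmDiff A B ∩ C), eps p k := (eps_prod_symmDiff _ _).symm
  have e2 : (∏ k ∈ B ∩ C, eps p k) * ∏ k ∈ A ∩ symmDiff B C, eps p k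
      = ∏ k ∈ symmDiff (B ∩ C) (A ∩ symmDiff B C), eps p k := (eps_prod_symmDiff _ _).symm
  calc ((-1:ℝ) ^ invc A B * ∏ k ∈ A ∩ B, eps p k) *
        ((-1) ^ invc A C * (-1) ^ invc B C * ∏ k ∈ symmDiff A B ∩ C, eps p k)
      = ((-1:ℝ) ^ invc A B * (-1) ^ invc A C * (-1) ^ invc B C) *
        ((∏ k ∈ A ∩ B, eps p k) * ∏ k ∈ symmDiff A B ∩ C, eps p k) := by ring
    _ = ((-1:ℝ) ^ invc A B * (-1) ^ invc A C * (-1) ^ invc B C) *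
        ((∏ k ∈ B ∩ C, eps p k) * ∏ k ∈ A ∩ symmDiff B C, eps p k) := by
          rw [e1, e2, hset]
    _ = ((-1:ℝ) ^ invc B C * ∏ k ∈ B ∩ C, eps p k) *
        ((-1) ^ invc A B * (-1) ^ invc A C * ∏ k ∈ A ∩ symmDiff B C, eps p k) := by ring

lemma clMul_assoc (x y z : Cl n) :
    clMul p (clMul p x y) z = clMul p x (clMul p y z) := by
  funext C
  show (∑ D : Finset (Fin n), ∑ E : Finset (Fin n),
      if symmDiff D E = C then (clMul p x y) D * z E * clSign p D E else 0)
    = ∑ A : Finset (Fin n), ∑ D : Finset (Fin n),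
      if symmDiff A D = C then x A * (clMul p y z) D * clSign p A D else 0
  have hL : ∀ D E : Finset (Fin n),
      (if symmDiff D E = C then (clMul p x y) D * z E * clSign p D E else 0)
      = ∑ A : Finset (Fin n), ∑ B : Finset (Fin n),
        if symmDiff A B = D ∧ symmDiff D E = C then
          x A * y B * z E * (clSign p A B * clSign p D E) else 0 := by
    intro D E
    by_cases hDE : symmDiff D E = C
    · simp only [hDE, eq_self_iff_true, if_true, and_true, clMul, Finset.sum_mul]
      refine Finset.sum_congr rfl fun A _ => ?_
      refine Finset.sum_congr rfl fun B _ => ?_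
      by_cases hAB : symmDiff A B = D
      · simp only [hAB, eq_self_iff_true, if_true]; ring
      · simp only [hAB, if_neg, if_false]; simp [hAB]
    · simp [hDE]
  have hR : ∀ A D : Finset (Fin n),
      (if symmDiff A D = C then x A * (clMul p y z) D * clSign p A D else 0)
      = ∑ B : Finset (Fin n), ∑ E : Finset (Fin n),
        if symmDiff B E = D ∧ symmDiff A D = C then
          x A * y B * z E * (clSign p B E * clSign p A D) else 0 := by
    intro A D
    by_cases hAD : symmDiff A D = C
    · simp only [hAD, eq_self_iff_true, if_true, and_true, clMul, Finset.mul_sum,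
        Finset.sum_mul]
      refine Finset.sum_congr rfl fun B _ => ?_
      refine Finset.sum_congr rfl fun E _ => ?_
      by_cases hBE : symmDiff B E = D
      · simp only [hBE, eq_self_iff_true, if_true]; ring
      · simp only [hBE, if_neg, if_false]; simp [hBE]
    · simp [hAD]
  simp only [hL, hR]
  -- LHS : ∑ D ∑ E ∑ A ∑ B  →  ∑ A ∑ B ∑ E (D := A Δ B)
  have L2 : (∑ D : Finset (Fin n), ∑ E : Finset (Fin n), ∑ A : Finset (Fin n),
        ∑ B : Finset (Fin n),
        if symmDiff A B = D ∧ symmDiff D E = C then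
          x A * y B * z E * (clSign p A B * clSign p D E) else 0)
      = ∑ A : Finset (Fin n), ∑ B : Finset (Fin n), ∑ E : Finset (Fin n),
        if symmDiff (symmDiff A B) E = C then
          x A * y B * z E * (clSign p A B * clSign p (symmDiff A B) E) else 0 := by
    rw [show (∑ A : Finset (Fin n), ∑ B : Finset (Fin n), ∑ E : Finset (Fin n),
        if symmDiff (symmDiff A B) E = C then
          x A * y B * z E * (clSign p A B * clSign p (symmDiff A B) E) else 0)
      = ∑ E : Finset (Fin n), ∑ A : Finset (Fin n), ∑ B : Finset (Fin n),
        if symmDiff (symmDiff A B) E = C then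
          x A * y B * z E * (clSign p A B * clSign p (symmDiff A B) E) else 0 from by
        rw [show (∑ A : Finset (Fin n), ∑ B : Finset (Fin n), ∑ E : Finset (Fin n),
            if symmDiff (symmDiff A B) E = C then
              x A * y B * z E * (clSign p A B * clSign p (symmDiff A B) E) else 0)
          = ∑ A : Finset (Fin n), ∑ E : Finset (Fin n), ∑ B : Finset (Fin n),
            if symmDiff (symmDiff A B) E = C then
              x A * y B * z E * (clSign p A B * clSign p (symmDiff A B) E) else 0 from
          Finset.sum_congr rfl fun A _ => Finset.sum_comm]
        exact Finset.sum_comm]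
    rw [Finset.sum_comm]
    refine Finset.sum_congr rfl fun E _ => ?_
    rw [Finset.sum_comm]
    refine Finset.sum_congr rfl fun A _ => ?_
    rw [Finset.sum_comm]
    refine Finset.sum_congr rfl fun B _ => ?_
    rw [Finset.sum_eq_single (symmDiff A B)]
    · simp
    · intro D _ hD
      rw [if_neg]
      exact fun h => hD h.1.symm
    · simp
  have R2 : (∑ A : Finset (Fin n), ∑ D : Finset (Fin n), ∑ B : Finset (Fin n),
        ∑ E : Finset (Fin n),
        if symmDiff B E = D ∧ symmDiff A D = C then
          x A * y B * z E * (clSign p B E * clSign p A D) else 0)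
      = ∑ A : Finset (Fin n), ∑ B : Finset (Fin n), ∑ E : Finset (Fin n),
        if symmDiff A (symmDiff B E) = C then
          x A * y B * z E * (clSign p B E * clSign p A (symmDiff B E)) else 0 := by
    refine Finset.sum_congr rfl fun A _ => ?_
    rw [Finset.sum_comm]
    refine Finset.sum_congr rfl fun B _ => ?_
    rw [Finset.sum_comm]
    refine Finset.sum_congr rfl fun E _ => ?_
    rw [Finset.sum_eq_single (symmDiff B E)]
    · simp
    · intro D _ hD
      rw [if_neg]
      exact fun h => hD h.1.symm
    · simp
  rw [L2, R2]
  -- swap E inner on LHS already matches; final termwise equality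
  refine Finset.sum_congr rfl fun A _ => Finset.sum_congr rfl fun B _ => ?_
  refine Finset.sum_congr rfl fun E _ => ?_
  rw [symmDiff_assoc]
  by_cases h : symmDiff A (symmDiff B E) = C
  · simp only [h, eq_self_iff_true, if_true]
    rw [clSign_cocycle (p := p) A B E]
  · simp [h]

/-- Right multiplication by `c` as a linear map. -/
def rmulL (p : ℕ) {n : ℕ} (c : Cl n) : Cl n →ₗ[ℝ] Cl n where
  toFun x := clMul p x c
  map_add' x y := clMul_add_left x y c
  map_smul' r x := clMul_smul_left r x c

/-- Right multiplication by `c` as a continuous linear map. -/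
def rmulCL (p : ℕ) {n : ℕ} (c : Cl n) : Cl n →L[ℝ] Cl n :=
  LinearMap.toContinuousLinearMap (rmulL p c)

lemma rmulCL_apply (c x : Cl n) : rmulCL p c x = clMul p x c := rfl

lemma continuous_uu (w : Fin n → ℝ) : Continuous fun x : Fin n → ℝ => uu x w := by
  unfold uu
  exact continuous_finset_sum _ fun l _ => (continuous_apply l).mul continuous_const

lemma integrable_smul_bdd {c : (Fin n → ℝ) → ℝ} (hc : Continuous c) (hb : ∀ x, |c x| ≤ 1)
    {g : (Fin n → ℝ) → Cl n} (hg : Integrable g) : Integrable fun x => c x • g x := by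
  refine hg.norm.mono' (hc.aestronglyMeasurable.smul hg.aestronglyMeasurable) ?_
  filter_upwards with x
  rw [norm_smul]
  calc ‖c x‖ * ‖g x‖ ≤ 1 * ‖g x‖ := by
        have : ‖c x‖ ≤ 1 := by rw [Real.norm_eq_abs]; exact hb x
        exact mul_le_mul_of_nonneg_right this (norm_nonneg _)
    _ = ‖g x‖ := one_mul _

lemma clMul_kernelMinus (g j : Cl n) (x w : Fin n → ℝ) :
    clMul p g (kernelMinus j x w)
      = Real.cos (uu x w) • g - Real.sin (uu x w) • clMul p g j := by
  rw [kernelMinus, clMul_sub_right, clMul_smul_right, clMul_smul_right, clMul_one_right]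

lemma integrable_clMul_kernel {h : (Fin n → ℝ) → Cl n} (hh : Integrable h)
    (j : Cl n) (w : Fin n → ℝ) :
    Integrable fun x => clMul p (h x) (kernelMinus j x w) := by
  simp only [clMul_kernelMinus]
  refine Integrable.sub ?_ ?_
  · exact integrable_smul_bdd (Real.continuous_cos.comp (continuous_uu w))
      (fun x => Real.abs_cos_le_one _) hh
  · refine integrable_smul_bdd (Real.continuous_sin.comp (continuous_uu w))
      (fun x => Real.abs_sin_le_one _) ?_
    exact (rmulCL p j).integrable_comp hh

lemma split_identity (i : Cl n) (hi : isRoot p i) (g α : Cl n) (c s : ℝ) :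
    clMul p (clMul p g α) (c • clOne n - s • i) =
      clMul p (clMul p g (c • clOne n - s • i))
          ((1/2 : ℝ) • (α + clMul p (clMul p (-i) α) i)) +
      clMul p (clMul p g (c • clOne n - s • (-i)))
          ((1/2 : ℝ) • (α - clMul p (clMul p (-i) α) i)) := by
  set M := clMul p (clMul p (-i) α) i with hM
  set αp := (1/2 : ℝ) • (α + M) with hαp
  set αm := (1/2 : ℝ) • (α - M) with hαm
  have hsum : αp + αm = α := by
    funext C
    simp only [hαp, hαm, Pi.add_apply, Pi.sub_apply, Pi.smul_apply, smul_eq_mul]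
    ring
  have hdiff : αm - αp = -M := by
    funext C
    simp only [hαp, hαm, Pi.add_apply, Pi.sub_apply, Pi.smul_apply, Pi.neg_apply, smul_eq_mul]
    ring
  have hii : clMul p i (-i) = clOne n := by
    rw [clMul_neg_right, hi, neg_neg]
  have hgiM : clMul p (clMul p g i) M = clMul p (clMul p g α) i := by
    rw [hM, clMul_assoc g i (clMul p (clMul p (-i) α) i),
      ← clMul_assoc i (clMul p (-i) α) i, ← clMul_assoc i (-i) α, hii, clMul_one_left,
      ← clMul_assoc g α i]
  have eL : clMul p (clMul p g α) (c • clOne n - s • i)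
      = c • clMul p g α - s • clMul p (clMul p g α) i := by
    rw [clMul_sub_right, clMul_smul_right, clMul_smul_right, clMul_one_right]
  have eK1 : clMul p g (c • clOne n - s • i) = c • g - s • clMul p g i := by
    rw [clMul_sub_right, clMul_smul_right, clMul_smul_right, clMul_one_right]
  have eK2 : clMul p g (c • clOne n - s • (-i)) = c • g + s • clMul p g i := by
    rw [clMul_sub_right, clMul_smul_right, clMul_smul_right, clMul_one_right,
      clMul_neg_right, smul_neg, sub_neg_eq_add]
  have e1 : clMul p (c • g - s • clMul p g i) αp
      = c • clMul p g αp - s • clMul p (clMul p g i) αp := by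
    rw [clMul_sub_left, clMul_smul_left, clMul_smul_left]
  have e2 : clMul p (c • g + s • clMul p g i) αm
      = c • clMul p g αm + s • clMul p (clMul p g i) αm := by
    rw [clMul_add_left, clMul_smul_left, clMul_smul_left]
  have h1 : clMul p g αp + clMul p g αm = clMul p g α := by
    rw [← clMul_add_right, hsum]
  have h2 : clMul p (clMul p g i) αm - clMul p (clMul p g i) αp
      = - clMul p (clMul p g α) i := by
    rw [← clMul_sub_right, hdiff, clMul_neg_right, hgiM]
  rw [eL, eK1, eK2, e1, e2]
  funext C
  have e1' := congrFun h1 C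
  have e2' := congrFun h2 C
  simp only [Pi.add_apply, Pi.sub_apply, Pi.neg_apply] at e1' e2'
  simp only [Pi.add_apply, Pi.sub_apply, Pi.smul_apply, Pi.neg_apply, smul_eq_mul]
  linear_combination (-c) * e1' + (-s) * e2'


/-- Right-linearity of the CFT, splitting constants into parts commuting / anticommuting
with `i` (where `i⁻¹ = -i`). -/
theorem cft_right_linear_split (p q : ℕ) (i : Cl (p + q)) (hi : isRoot p i)
    (h₁ h₂ : (Fin (p + q) → ℝ) → Cl (p + q))
    (hint₁ : Integrable h₁) (hint₂ : Integrable h₂)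
    (α β : Cl (p + q)) (w : Fin (p + q) → ℝ) :
    cft p i (fun x => clMul p (h₁ x) α + clMul p (h₂ x) β) w =
      clMul p (cft p i h₁ w) ((1/2 : ℝ) • (α + clMul p (clMul p (-i) α) i)) +
      clMul p (cft p (-i) h₁ w) ((1/2 : ℝ) • (α - clMul p (clMul p (-i) α) i)) +
      clMul p (cft p i h₂ w) ((1/2 : ℝ) • (β + clMul p (clMul p (-i) β) i)) +
      clMul p (cft p (-i) h₂ w) ((1/2 : ℝ) • (β - clMul p (clMul p (-i) β) i)) := by
  set αp := (1/2 : ℝ) • (α + clMul p (clMul p (-i) α) i) with hαp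
  set αm := (1/2 : ℝ) • (α - clMul p (clMul p (-i) α) i) with hαm
  set βp := (1/2 : ℝ) • (β + clMul p (clMul p (-i) β) i) with hβp
  set βm := (1/2 : ℝ) • (β - clMul p (clMul p (-i) β) i) with hβm
  have key : ∀ x, clMul p (clMul p (h₁ x) α + clMul p (h₂ x) β) (kernelMinus i x w)
      = clMul p (clMul p (h₁ x) (kernelMinus i x w)) αp
      + clMul p (clMul p (h₁ x) (kernelMinus (-i) x w)) αm
      + (clMul p (clMul p (h₂ x) (kernelMinus i x w)) βp
      + clMul p (clMul p (h₂ x) (kernelMinus (-i) x w)) βm) := by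
    intro x
    rw [clMul_add_left]
    have k1 : kernelMinus i x w
        = Real.cos (uu x w) • clOne (p + q) - Real.sin (uu x w) • i := rfl
    have k2 : kernelMinus (-i) x w
        = Real.cos (uu x w) • clOne (p + q) - Real.sin (uu x w) • (-i) := rfl
    rw [k1, k2, split_identity i hi (h₁ x) α _ _, split_identity i hi (h₂ x) β _ _]
  have hF₁ : Integrable fun x => clMul p (h₁ x) (kernelMinus i x w) :=
    integrable_clMul_kernel hint₁ i w
  have hF₂ : Integrable fun x => clMul p (h₁ x) (kernelMinus (-i) x w) :=
    integrable_clMul_kernel hint₁ (-i) w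
  have hF₃ : Integrable fun x => clMul p (h₂ x) (kernelMinus i x w) :=
    integrable_clMul_kernel hint₂ i w
  have hF₄ : Integrable fun x => clMul p (h₂ x) (kernelMinus (-i) x w) :=
    integrable_clMul_kernel hint₂ (-i) w
  have J : ∀ (F : (Fin (p + q) → ℝ) → Cl (p + q)), Integrable F → ∀ γ : Cl (p + q),
      (∫ x, clMul p (F x) γ) = clMul p (∫ x, F x) γ := by
    intro F hF γ
    have := (rmulCL p γ).integral_comp_comm hF
    simpa only [rmulCL_apply] using this
  have I₁ : Integrable fun x => clMul p (clMul p (h₁ x) (kernelMinus i x w)) αp :=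
    (rmulCL p αp).integrable_comp hF₁
  have I₂ : Integrable fun x => clMul p (clMul p (h₁ x) (kernelMinus (-i) x w)) αm :=
    (rmulCL p αm).integrable_comp hF₂
  have I₃ : Integrable fun x => clMul p (clMul p (h₂ x) (kernelMinus i x w)) βp :=
    (rmulCL p βp).integrable_comp hF₃
  have I₄ : Integrable fun x => clMul p (clMul p (h₂ x) (kernelMinus (-i) x w)) βm :=
    (rmulCL p βm).integrable_comp hF₄
  calc cft p i (fun x => clMul p (h₁ x) α + clMul p (h₂ x) β) w
      = ∫ x, (clMul p (clMul p (h₁ x) (kernelMinus i x w)) αp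
          + clMul p (clMul p (h₁ x) (kernelMinus (-i) x w)) αm
          + (clMul p (clMul p (h₂ x) (kernelMinus i x w)) βp
          + clMul p (clMul p (h₂ x) (kernelMinus (-i) x w)) βm)) := by
        unfold cft
        exact integral_congr_ae (Filter.Eventually.of_forall key)
    _ = (∫ x, clMul p (clMul p (h₁ x) (kernelMinus i x w)) αp)
        + (∫ x, clMul p (clMul p (h₁ x) (kernelMinus (-i) x w)) αm)
        + ((∫ x, clMul p (clMul p (h₂ x) (kernelMinus i x w)) βp)
        + (∫ x, clMul p (clMul p (h₂ x) (kernelMinus (-i) x w)) βm)) := by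
        have I₁₂ : Integrable (fun x => clMul p (clMul p (h₁ x) (kernelMinus i x w)) αp
            + clMul p (clMul p (h₁ x) (kernelMinus (-i) x w)) αm) := I₁.add I₂
        have I₃₄ : Integrable (fun x => clMul p (clMul p (h₂ x) (kernelMinus i x w)) βp
            + clMul p (clMul p (h₂ x) (kernelMinus (-i) x w)) βm) := I₃.add I₄
        rw [integral_add I₁₂ I₃₄, integral_add I₁ I₂, integral_add I₃ I₄]
    _ = clMul p (cft p i h₁ w) αp + clMul p (cft p (-i) h₁ w) αm
        + (clMul p (cft p i h₂ w) βp + clMul p (cft p (-i) h₂ w) βm) := by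
        rw [J _ hF₁ αp, J _ hF₂ αm, J _ hF₃ βp, J _ hF₄ βm]
        rfl
    _ = _ := by abel
end
end

section
/- Kernel bound for complex arguments: let i ∈ Cl(p,q) with i² = -1, let z = a + jb with a, b ∈ ℝⁿ and j the complex imaginary unit, and set u(x,z) = u(x,a) - j u(x,b) with u(x,v) = Σ_l x_l v_l. Then |e^{-iu(x,z)}| ≤ (1 + |i|²)^{1/2} e^{|x||b|}, where e^{-iu(x,z)} = cos(u(x,z)) - i sin(u(x,z)) with cos and sin of a complex argument, and | · | is the modulus on ℂ ⊗ Cl(p,q) given by |M|² = Σ_A |M_A|². -/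
open MeasureTheory Finset Filter
noncomputable section

/-- Complexified modulus on `ℂ ⊗ Cl(p,q)`: `|M|² = Σ_A |M_A|²`. -/
def modC {n : ℕ} (M : Finset (Fin n) → ℂ) : ℝ :=
  Real.sqrt (∑ A : Finset (Fin n), ‖M A‖ ^ 2)

/-! The real part of `z` only rotates the two components `(1, i)` of the kernel; its imaginary
part stretches them by at most `cosh (u(x,b)) ≤ e^{|u(x,b)|}`, and Cauchy–Schwarz bounds
`|u(x,b)|` by `|x||b|`. -/

open Complex in
theorem Complex.norm_sq_cos_mul_sub_sin_mul (α γ d c : ℝ) :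
    ‖cos (α + γ * I) * d - sin (α + γ * I) * c‖ ^ 2 =
      Real.cosh γ ^ 2 * (Real.cos α * d - Real.sin α * c) ^ 2 +
        Real.sinh γ ^ 2 * (Real.sin α * d + Real.cos α * c) ^ 2 := by
  have h : cos (α + γ * I) * d - sin (α + γ * I) * c =
      ↑(Real.cosh γ * (Real.cos α * d - Real.sin α * c)) +
        ↑(-(Real.sinh γ * (Real.sin α * d + Real.cos α * c))) * I := by
    rw [cos_add_mul_I, sin_add_mul_I]
    push_cast
    ring
  rw [h, Complex.sq_norm, normSq_add_mul_I]
  ring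

open Complex in
theorem Complex.norm_sq_cos_mul_sub_sin_mul_le (w : ℂ) (d c : ℝ) :
    ‖cos w * d - sin w * c‖ ^ 2 ≤ Real.cosh w.im ^ 2 * (d ^ 2 + c ^ 2) := by
  rw [← re_add_im w, norm_sq_cos_mul_sub_sin_mul, re_add_im]
  have rotation : (Real.cos w.re * d - Real.sin w.re * c) ^ 2 +
      (Real.sin w.re * d + Real.cos w.re * c) ^ 2 = d ^ 2 + c ^ 2 := by
    linear_combination (d ^ 2 + c ^ 2) * Real.sin_sq_add_cos_sq w.re
  have sinh_le_cosh : Real.sinh w.im ^ 2 ≤ Real.cosh w.im ^ 2 := by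
    nlinarith [Real.cosh_sq w.im]
  nlinarith [sq_nonneg (Real.sin w.re * d + Real.cos w.re * c)]

theorem Real.cosh_le_exp_abs (x : ℝ) : Real.cosh x ≤ Real.exp |x| := by
  rw [← Real.cosh_abs, Real.cosh_eq]
  have : Real.exp (-|x|) ≤ Real.exp |x| := Real.exp_le_exp.2 (by linarith [abs_nonneg x])
  linarith

theorem abs_uu_le {n : ℕ} (x w : Fin n → ℝ) :
    |uu x w| ≤ Real.sqrt (∑ l, x l ^ 2) * Real.sqrt (∑ l, w l ^ 2) := by
  have cs := Real.sum_mul_le_sqrt_mul_sqrt univ x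
  have neg : -uu x w = ∑ l, x l * (-w) l := by simp [uu]
  rw [abs_le, neg_le, neg]
  exact ⟨by simpa using cs (-w), cs w⟩

theorem modSq_nonneg {n : ℕ} (M : Cl n) : 0 ≤ modSq M :=
  sum_nonneg fun _ _ => sq_nonneg _

theorem modC_cos_mul_one_sub_sin_mul_le {n : ℕ} (i : Cl n) (w : ℂ) :
    modC (fun C => Complex.cos w * (if C = ∅ then 1 else 0) - Complex.sin w * (i C : ℂ)) ≤
      Real.sqrt (1 + modSq i) * Real.cosh w.im := by
  have entry (C : Finset (Fin n)) :
      ‖Complex.cos w * (if C = ∅ then 1 else 0) - Complex.sin w * (i C : ℂ)‖ ^ 2 ≤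
        Real.cosh w.im ^ 2 * ((if C = ∅ then 1 else 0) ^ 2 + i C ^ 2) := by
    have := Complex.norm_sq_cos_mul_sub_sin_mul_le w (if C = ∅ then 1 else 0) (i C)
    split_ifs at this ⊢ <;> simpa using this
  have total : ∑ C : Finset (Fin n), Real.cosh w.im ^ 2 * ((if C = ∅ then 1 else 0) ^ 2 + i C ^ 2)
      = (1 + modSq i) * Real.cosh w.im ^ 2 := by
    simp only [← mul_sum, sum_add_distrib, ite_pow, one_pow, modSq]
    norm_num
    ring
  rw [← Real.sqrt_sq (Real.cosh_pos w.im).le,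
    ← Real.sqrt_mul (add_nonneg zero_le_one (modSq_nonneg i))]
  exact Real.sqrt_le_sqrt ((sum_le_sum fun C _ => entry C).trans total.le)

theorem kernel_bound_complex_general (p q : ℕ) (i : Cl (p + q))
    (x a b : Fin (p + q) → ℝ) :
    modC (fun C =>
        Complex.cos ((uu x a : ℂ) - Complex.I * (uu x b : ℂ)) * (if C = ∅ then 1 else 0) -
        Complex.sin ((uu x a : ℂ) - Complex.I * (uu x b : ℂ)) * (i C : ℂ)) ≤
      Real.sqrt (1 + modSq i) *
        Real.exp (Real.sqrt (∑ l, x l ^ 2) * Real.sqrt (∑ l, b l ^ 2)) := by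
  refine (modC_cos_mul_one_sub_sin_mul_le i _).trans ?_
  have im_eq : ((uu x a : ℂ) - Complex.I * (uu x b : ℂ)).im = -uu x b := by simp
  rw [im_eq, Real.cosh_neg]
  gcongr
  exact (Real.cosh_le_exp_abs _).trans (Real.exp_le_exp.2 (abs_uu_le x b))

/-- Kernel bound for complex arguments: with `z = a + jb` and
`u(x,z) = u(x,a) - j u(x,b)`, `|e^{-iu(x,z)}| ≤ (1+|i|²)^{1/2} e^{|x||b|}`. -/
theorem kernel_bound_complex (p q : ℕ) (i : Cl (p + q)) (hi : isRoot p i)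
    (x a b : Fin (p + q) → ℝ) :
    modC (fun C =>
        Complex.cos ((uu x a : ℂ) - Complex.I * (uu x b : ℂ)) * (if C = ∅ then 1 else 0) -
        Complex.sin ((uu x a : ℂ) - Complex.I * (uu x b : ℂ)) * (i C : ℂ)) ≤
      Real.sqrt (1 + modSq i) *
        Real.exp (Real.sqrt (∑ l, x l ^ 2) * Real.sqrt (∑ l, b l ^ 2)) :=
  kernel_bound_complex_general p q i x a b
end
end
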